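/- Let R be a finite commutative Frobenius ring of characteristic 2 and let G be a finite abelian group of order n and exponent 2, with a fixed enumeration of its elements identifying indices with Z/nZ. Let v1, v2 ∈ RG and let A be an n×n reverse circulant matrix over R. If σ(v1) and σ(v2) are circulant matrices (with respect to the Z/nZ indexing) and σ((v1+v2)²) + A² = I_n, then the code C_σ generated by the rows of M(σ) is a self-dual code of length 4n. -/

import Mathlib

open Matrix

/-- The dual of a code (submodule of `ι → R`) with respect to the standard bilinear form. -/
def dualCode {R : Type*} [CommRing R] {ι : Type*} [Fintype ι]
    (C : Submodule R (ι → R)) : Submodule R (ι → R) where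
  carrier := {x | ∀ c ∈ C, ∑ i, x i * c i = 0}
  add_mem' := by
    intro a b ha hb c hc
    simp only [Set.mem_setOf_eq] at ha hb ⊢
    simp [Pi.add_apply, add_mul, Finset.sum_add_distrib, ha c hc, hb c hc]
  zero_mem' := by
    intro c hc
    simp
  smul_mem' := by
    intro r a ha c hc
    simp only [Set.mem_setOf_eq] at ha ⊢
    simp [Pi.smul_apply, smul_eq_mul, mul_assoc, ← Finset.mul_sum, ha c hc]

/-- A code is self-dual if it equals its dual. -/
def IsSelfDual {R : Type*} [CommRing R] {ι : Type*} [Fintype ι]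
    (C : Submodule R (ι → R)) : Prop :=
  C = dualCode C

/-- The code generated by the rows of a matrix. -/
def rowSpan {R : Type*} [CommRing R] {κ ι : Type*} (M : Matrix κ ι R) :
    Submodule R (ι → R) :=
  Submodule.span R (Set.range M)

/-- The matrix `σ(v)` of a group ring element `v` with respect to a fixed enumeration `e`
of the group elements: its `(i,j)` entry is the coefficient of `v` at `(e i)⁻¹ * (e j)`. -/
def sigma {R : Type*} [CommRing R] {G : Type*} [Group G] {ι : Type*}
    (e : ι ≃ G) (v : MonoidAlgebra R G) : Matrix ι ι R :=
  Matrix.of fun i j => v.coeff ((e i)⁻¹ * e j)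

/-- The canonical involution `v ↦ v* = ∑ α_g g⁻¹` on a group ring. -/
def invol {R : Type*} [CommRing R] {G : Type*} [Group G]
    (v : MonoidAlgebra R G) : MonoidAlgebra R G :=
  MonoidAlgebra.ofCoeff (Finsupp.equivMapDomain (Equiv.inv G) v.coeff)

/-- A matrix indexed by `ZMod n` is reverse circulant if its `(i,j)` entry
depends only on `i + j`. -/
def IsRevCirculant {R : Type*} {n : ℕ} (A : Matrix (ZMod n) (ZMod n) R) : Prop :=
  ∃ a : ZMod n → R, ∀ i j, A i j = a (i + j)

/-- A matrix indexed by `ZMod n` is circulant if its `(i,j)` entry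
depends only on `j - i`. -/
def IsCirculant {R : Type*} {n : ℕ} (A : Matrix (ZMod n) (ZMod n) R) : Prop :=
  ∃ a : ZMod n → R, ∀ i j, A i j = a (j - i)

/-!
When `G` has exponent 2 every `σ(v)` is symmetric. Circulant matrices commute with each other, and
symmetric circulant matrices commute with reverse circulant ones, so in characteristic 2 the block
matrix `X` satisfies `X Xᵀ = σ(v₁)² + (σ(v₂) + A)² = σ((v₁ + v₂)²) + A² = I`. A matrix `[I | X]`
with `X Xᵀ = -I` generates a self-dual code: its rows are orthogonal because `I + X Xᵀ = 0`, and a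
word `(a, b)` orthogonal to them has `a = -X b`, hence `b = Xᵀ a` and `(a, b) = a [I | X]`.
-/

section GroupRing

variable {R : Type*} [CommRing R] {G : Type*} [Group G] {ι : Type*}

lemma sigma_add (e : ι ≃ G) (v w : MonoidAlgebra R G) :
    sigma e (v + w) = sigma e v + sigma e w := by
  ext i j
  simp [sigma, MonoidAlgebra.coeff_add]

lemma sigma_mul [Fintype ι] (e : ι ≃ G) (v w : MonoidAlgebra R G) :
    sigma e (v * w) = sigma e v * sigma e w := by
  let : Fintype G := Fintype.ofEquiv ι e
  ext i j
  rw [mul_apply, sigma, of_apply, MonoidAlgebra.coeff_mul_apply_left,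
    Finsupp.sum_fintype _ _ fun _ => zero_mul _]
  refine (Fintype.sum_equiv (e.trans (Equiv.mulLeft (e i)⁻¹)) _ _ fun k => ?_).symm
  simp only [sigma, of_apply, Equiv.trans_apply, Equiv.coe_mulLeft, _root_.mul_inv_rev, inv_inv,
    mul_assoc, mul_inv_cancel_left]

lemma coeff_invol (v : MonoidAlgebra R G) (g : G) : (invol v).coeff g = v.coeff g⁻¹ :=
  Finsupp.equivMapDomain_apply _ _ _

lemma sigma_invol (e : ι ≃ G) (v : MonoidAlgebra R G) : sigma e (invol v) = (sigma e v)ᵀ := by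
  ext i j
  simp [sigma, coeff_invol]

lemma invol_eq_self_of_sq_eq_one (hexp : ∀ g : G, g ^ 2 = 1) (v : MonoidAlgebra R G) :
    invol v = v := by
  refine MonoidAlgebra.coeff_injective (Finsupp.ext fun g => ?_)
  rw [coeff_invol, inv_eq_of_mul_eq_one_right (by rw [← sq, hexp])]

lemma transpose_sigma_of_sq_eq_one (hexp : ∀ g : G, g ^ 2 = 1) (e : ι ≃ G)
    (v : MonoidAlgebra R G) : (sigma e v)ᵀ = sigma e v := by
  rw [← sigma_invol, invol_eq_self_of_sq_eq_one hexp]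

end GroupRing

section Circulant

variable {R : Type*} {n : ℕ} {A B C : Matrix (ZMod n) (ZMod n) R}

lemma IsCirculant.exists_eq_circulant (hB : IsCirculant B) : ∃ b, B = circulant b := by
  -- Mathlib's `circulant b` has entries `b (i - j)`, the reverse of `IsCirculant`.
  obtain ⟨b, hb⟩ := hB
  exact ⟨fun d => b (-d), ext fun i j => by rw [hb, circulant_apply, neg_sub]⟩

lemma IsCirculant.commute [CommSemiring R] [NeZero n] (hB : IsCirculant B)
    (hC : IsCirculant C) : Commute B C := by
  obtain ⟨b, rfl⟩ := hB.exists_eq_circulant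
  obtain ⟨c, rfl⟩ := hC.exists_eq_circulant
  exact circulant_mul_comm b c

lemma IsRevCirculant.transpose_eq (hA : IsRevCirculant A) : Aᵀ = A := by
  obtain ⟨a, ha⟩ := hA
  ext i j
  rw [transpose_apply, ha, ha, add_comm]

lemma IsCirculant.commute_of_isRevCirculant [CommSemiring R] [NeZero n] (hB : IsCirculant B)
    (hBt : Bᵀ = B) (hA : IsRevCirculant A) : Commute B A := by
  obtain ⟨b, hb⟩ := hB
  obtain ⟨a, ha⟩ := hA
  have hb_neg : ∀ d, b (-d) = b d := fun d => by
    simpa [hb] using congr_fun₂ hBt 0 d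
  ext i j
  refine Fintype.sum_equiv (Equiv.addRight (j - i)) _ _ fun k => ?_
  simp only [Equiv.coe_addRight, hb, ha]
  rw [show i + (k + (j - i)) = k + j by ring, show j - (k + (j - i)) = -(k - i) by ring, hb_neg,
    mul_comm]

end Circulant

section Codes

variable {R : Type*} [CommRing R] {ι κ : Type*}

lemma mem_rowSpan [Fintype κ] {M : Matrix κ ι R} {x : ι → R} :
    x ∈ rowSpan M ↔ ∃ a, a ᵥ* M = x := by
  rw [rowSpan, show Set.range M = Set.range M.row from rfl, ← range_vecMulLinear]
  rfl

variable [Fintype ι]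

lemma mem_dualCode {C : Submodule R (ι → R)} {x : ι → R} :
    x ∈ dualCode C ↔ ∀ c ∈ C, x ⬝ᵥ c = 0 :=
  Iff.rfl

lemma rowSpan_le_dualCode [Fintype κ] {M : Matrix κ ι R} (hM : M * Mᵀ = 0) :
    rowSpan M ≤ dualCode (rowSpan M) := by
  rintro _ hx
  obtain ⟨a, rfl⟩ := mem_rowSpan.1 hx
  rw [mem_dualCode]
  rintro _ hc
  obtain ⟨b, rfl⟩ := mem_rowSpan.1 hc
  rw [← mulVec_transpose M b, dotProduct_mulVec, vecMul_vecMul, hM, vecMul_zero, zero_dotProduct]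

lemma mulVec_eq_zero_of_mem_dualCode {M : Matrix κ ι R} {x : ι → R}
    (hx : x ∈ dualCode (rowSpan M)) : M *ᵥ x = 0 := by
  ext i
  rw [mulVec, dotProduct_comm]
  exact hx _ (Submodule.subset_span ⟨i, rfl⟩)

variable [DecidableEq ι]

lemma isSelfDual_rowSpan_fromCols_one {X : Matrix ι ι R} (hX : X * Xᵀ = -1) :
    IsSelfDual (rowSpan (fromCols (1 : Matrix ι ι R) X)) := by
  have hXtX : Xᵀ * X = -1 := by
    rw [← neg_eq_iff_eq_neg, ← mul_neg, mul_eq_one_comm, neg_mul, hX, neg_neg]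
  refine le_antisymm (rowSpan_le_dualCode ?_) fun x hx => ?_
  · rw [transpose_fromCols, fromCols_mul_fromRows, transpose_one, mul_one, hX, add_neg_cancel]
  · obtain ⟨a, b, rfl⟩ : ∃ a b, x = Sum.elim a b :=
      ⟨x ∘ Sum.inl, x ∘ Sum.inr, by ext (_ | _) <;> rfl⟩
    have hab := mulVec_eq_zero_of_mem_dualCode hx
    rw [fromCols_mulVec_sumElim, one_mulVec, add_eq_zero_iff_eq_neg] at hab
    refine mem_rowSpan.2 ⟨a, ?_⟩
    rw [vecMul_fromCols, vecMul_one, ← mulVec_transpose, hab, mulVec_neg, mulVec_mulVec, hXtX,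
      neg_mulVec, one_mulVec, neg_neg]

end Codes

section CharTwo

variable {R : Type*} [CommRing R] [CharP R 2] {ι : Type*} [Fintype ι] [DecidableEq ι]

lemma fromBlocks_mul_transpose_self {B C : Matrix ι ι R} (hB : Bᵀ = B) (hC : Cᵀ = C)
    (hBC : Commute B C) (hsq : B ^ 2 + C ^ 2 = 1) :
    fromBlocks B C C B * (fromBlocks B C C B)ᵀ = 1 := by
  have hcross : B * C + C * B = 0 := by
    rw [hBC.eq]
    ext i j
    exact CharTwo.add_self_eq_zero _
  rw [fromBlocks_transpose, hB, hC, fromBlocks_multiply, ← sq, ← sq, hsq, hcross,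
    add_comm (C ^ 2), hsq, add_comm (C * B), hcross, fromBlocks_one]

end CharTwo

theorem selfDual_of_exponent_two_group_general
    {R : Type*} [CommRing R] [CharP R 2]
    {n : ℕ} [NeZero n] {G : Type*} [CommGroup G]
    (hexp : ∀ g : G, g ^ 2 = 1) (e : ZMod n ≃ G)
    (v1 v2 : MonoidAlgebra R G) (A : Matrix (ZMod n) (ZMod n) R)
    (hA : IsRevCirculant A)
    (h1 : IsCirculant (sigma e v1)) (h2 : IsCirculant (sigma e v2))
    (h3 : sigma e ((v1 + v2) ^ 2) + A ^ 2 = 1) :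
    IsSelfDual (rowSpan (Matrix.fromCols (1 : Matrix (ZMod n ⊕ ZMod n) (ZMod n ⊕ ZMod n) R)
        (Matrix.fromBlocks (sigma e v1) (sigma e v2 + A) (sigma e v2 + A) (sigma e v1)))) := by
  have hσ1 := transpose_sigma_of_sq_eq_one hexp e v1
  have hσ2 := transpose_sigma_of_sq_eq_one hexp e v2
  have h2A : Commute (sigma e v2) A := h2.commute_of_isRevCirculant hσ2 hA
  have hcomm : Commute (sigma e v1) (sigma e v2 + A) :=
    (h1.commute h2).add_right (h1.commute_of_isRevCirculant hσ1 hA)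
  have hsq : sigma e v1 ^ 2 + (sigma e v2 + A) ^ 2 = 1 := by
    rw [← h3, sq (v1 + v2), sigma_mul, sigma_add, ← sq, add_pow_char_of_commute _ (h1.commute h2),
      add_pow_char_of_commute _ h2A, add_assoc]
  apply isSelfDual_rowSpan_fromCols_one
  rw [fromBlocks_mul_transpose_self hσ1 (by rw [transpose_add, hσ2, hA.transpose_eq]) hcomm hsq,
    CharTwo.neg_eq]

/-- Lemma 2.6: for a finite abelian group of exponent 2, if `σ(v₁)`, `σ(v₂)` are
circulant and `σ((v₁+v₂)²) + A² = I`, then `C_σ` is a self-dual code of length `4n`. -/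
theorem selfDual_of_exponent_two_group
    {R : Type*} [CommRing R] [Fintype R] [CharP R 2]
    (hFrob : Module.Injective R R)
    {n : ℕ} [NeZero n] {G : Type*} [CommGroup G] [Fintype G]
    (hexp : ∀ g : G, g ^ 2 = 1) (e : ZMod n ≃ G)
    (v1 v2 : MonoidAlgebra R G) (A : Matrix (ZMod n) (ZMod n) R)
    (hA : IsRevCirculant A)
    (h1 : IsCirculant (sigma e v1)) (h2 : IsCirculant (sigma e v2))
    (h3 : sigma e ((v1 + v2) ^ 2) + A ^ 2 = 1) :
    IsSelfDual (rowSpan (Matrix.fromCols (1 : Matrix (ZMod n ⊕ ZMod n) (ZMod n ⊕ ZMod n) R)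
        (Matrix.fromBlocks (sigma e v1) (sigma e v2 + A) (sigma e v2 + A) (sigma e v1)))) :=
  selfDual_of_exponent_two_group_general hexp e v1 v2 A hA h1 h2 h3
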